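/- arXiv:2105.13656 — 7 statements merged into one kernel-verified Lean document; each statement's English description precedes it below -/
import Mathlib

section
/- Let A, E ∈ ℂ^{n×n} be such that the pencil L(s) = A + sE is regular. Then the unstructured distance to a common null space satisfies δ₀(A,E) = √(λ_min(AᴴA + EᴴE)); that is, the infimum of √(‖Δ_A‖² + ‖Δ_E‖²) over all pairs (Δ_A, Δ_E) ∈ ℂ^{n×n} × ℂ^{n×n} for which there exists a nonzero vector v ∈ ℂⁿ with (A − Δ_A)v = 0 and (E − Δ_E)v = 0 equals the square root of the smallest eigenvalue of the positive semidefinite Hermitian matrix AᴴA + EᴴE. -/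
open Matrix
open scoped ComplexOrder

/-- The spectral norm (ℓ² operator norm) of a complex matrix. -/
noncomputable def specNorm {k : Type*} [Fintype k] [DecidableEq k]
    (X : Matrix k k ℂ) : ℝ :=
  ‖Matrix.toEuclideanCLM (𝕜 := ℂ) X‖

/-- The smallest eigenvalue of a Hermitian matrix (junk value `0` otherwise). -/
noncomputable def lamMin {k : Type*} [Fintype k] [DecidableEq k]
    (H : Matrix k k ℂ) : ℝ :=
  if h : H.IsHermitian then ⨅ i, h.eigenvalues i else 0

/-! If `(A - ΔA) v = (E - ΔE) v = 0` for a unit vector `v`, then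
`λ_min(AᴴA + EᴴE) ≤ vᴴ(AᴴA + EᴴE)v = ‖Av‖² + ‖Ev‖² = ‖ΔA v‖² + ‖ΔE v‖² ≤ ‖ΔA‖² + ‖ΔE‖²`.
Equality is attained by the rank-one perturbations `ΔA = (Av)vᴴ`, `ΔE = (Ev)vᴴ` built from a unit
eigenvector `v` for the smallest eigenvalue: their spectral norms are `‖Av‖` and `‖Ev‖`. -/

open WithLp
open scoped InnerProductSpace

variable {ι : Type*} [Fintype ι]

namespace Matrix

lemma sub_vecMulVec_mulVec_self {R : Type*} [Ring R] (B : Matrix ι ι R) {x y : ι → R}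
    (hyx : y ⬝ᵥ x = 1) : (B - vecMulVec (B *ᵥ x) y) *ᵥ x = 0 := by
  rw [sub_mulVec, vecMulVec_mulVec, hyx, MulOpposite.op_one, one_smul, sub_self]

variable [DecidableEq ι]

lemma norm_toEuclideanLin_le_specNorm (X : Matrix ι ι ℂ) (x : EuclideanSpace ℂ ι) :
    ‖toEuclideanLin X x‖ ≤ specNorm X * ‖x‖ :=
  (toEuclideanCLM (𝕜 := ℂ) X).le_opNorm x

lemma specNorm_vecMulVec_star (x y : EuclideanSpace ℂ ι) :
    specNorm (vecMulVec x (star y)) = ‖x‖ * ‖y‖ := by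
  have h : toEuclideanCLM (𝕜 := ℂ) (vecMulVec x (star y)) = InnerProductSpace.rankOne ℂ x y := by
    apply ContinuousLinearMap.coe_injective
    rw [coe_toEuclideanCLM_eq_toEuclideanLin, ← InnerProductSpace.symm_toEuclideanLin_rankOne,
      LinearEquiv.apply_symm_apply]
  rw [specNorm, h, InnerProductSpace.norm_rankOne]

lemma inner_toEuclideanLin_conjTranspose_mul_self (A : Matrix ι ι ℂ) (x : EuclideanSpace ℂ ι) :
    ⟪x, toEuclideanLin (Aᴴ * A) x⟫_ℂ = ‖toEuclideanLin A x‖ ^ 2 := by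
  rw [toLpLin_mul_same, LinearMap.comp_apply, toEuclideanLin_conjTranspose_eq_adjoint,
    LinearMap.adjoint_inner_right]
  exact inner_self_eq_norm_sq_to_K _

lemma re_inner_toEuclideanLin_gram (A E : Matrix ι ι ℂ) (x : EuclideanSpace ℂ ι) :
    (⟪x, toEuclideanLin (Aᴴ * A + Eᴴ * E) x⟫_ℂ).re =
      ‖toEuclideanLin A x‖ ^ 2 + ‖toEuclideanLin E x‖ ^ 2 := by
  rw [map_add, LinearMap.add_apply, inner_add_right, inner_toEuclideanLin_conjTranspose_mul_self,
    inner_toEuclideanLin_conjTranspose_mul_self]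
  norm_cast

lemma lamMin_of_isEmpty [IsEmpty ι] (H : Matrix ι ι ℂ) : lamMin H = 0 := by
  unfold lamMin
  split_ifs <;> simp

namespace IsHermitian

variable {H : Matrix ι ι ℂ} (hH : H.IsHermitian)
include hH

lemma lamMin_eq : lamMin H = ⨅ i, hH.eigenvalues i := dif_pos hH

lemma lamMin_le_eigenvalues (i : ι) : lamMin H ≤ hH.eigenvalues i :=
  hH.lamMin_eq ▸ ciInf_le (Finite.bddBelow_range _) i

lemma exists_eigenvalues_eq_lamMin [Nonempty ι] : ∃ i, hH.eigenvalues i = lamMin H :=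
  hH.lamMin_eq ▸ exists_eq_ciInf_of_finite

lemma toEuclideanLin_eigenvectorBasis (i : ι) :
    toEuclideanLin H (hH.eigenvectorBasis i) = (hH.eigenvalues i : ℂ) • hH.eigenvectorBasis i := by
  have h := congrArg (toLp 2) (hH.mulVec_eigenvectorBasis i)
  rwa [RCLike.real_smul_eq_coe_smul (K := ℂ), WithLp.toLp_smul, toLp_ofLp] at h

lemma inner_toEuclideanLin_eq_sum (x : EuclideanSpace ℂ ι) :
    ⟪x, toEuclideanLin H x⟫_ℂ =
      ∑ i, (hH.eigenvalues i : ℂ) * ‖⟪hH.eigenvectorBasis i, x⟫_ℂ‖ ^ 2 := by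
  have hsymm := isSymmetric_toEuclideanLin_iff.mpr hH
  rw [← hH.eigenvectorBasis.sum_inner_mul_inner]
  refine Finset.sum_congr rfl fun i _ => ?_
  rw [← hsymm, hH.toEuclideanLin_eigenvectorBasis, inner_smul_left, Complex.conj_ofReal,
    ← inner_conj_symm x, mul_left_comm, Complex.conj_mul']

lemma lamMin_mul_norm_sq_le (x : EuclideanSpace ℂ ι) :
    lamMin H * ‖x‖ ^ 2 ≤ (⟪x, toEuclideanLin H x⟫_ℂ).re := by
  rw [hH.inner_toEuclideanLin_eq_sum, ← hH.eigenvectorBasis.sum_sq_norm_inner_right,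
    Finset.mul_sum, Complex.re_sum]
  refine Finset.sum_le_sum fun i _ => ?_
  norm_cast
  exact mul_le_mul_of_nonneg_right (hH.lamMin_le_eigenvalues i) (sq_nonneg _)

end IsHermitian

lemma lamMin_gram_le_specNorm_sq_add_of_mulVec_eq_zero {A E DA DE : Matrix ι ι ℂ} {v : ι → ℂ}
    (hv : v ≠ 0) (hA : (A - DA) *ᵥ v = 0) (hE : (E - DE) *ᵥ v = 0) :
    lamMin (Aᴴ * A + Eᴴ * E) ≤ specNorm DA ^ 2 + specNorm DE ^ 2 := by
  have hH := (isHermitian_conjTranspose_mul_self A).add (isHermitian_conjTranspose_mul_self E)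
  set x : EuclideanSpace ℂ ι := toLp 2 v
  have hx : 0 < ‖x‖ ^ 2 := by
    have : x ≠ 0 := fun h => hv (congrArg ofLp h)
    positivity
  have hperturb : ∀ {B D : Matrix ι ι ℂ}, (B - D) *ᵥ v = 0 →
      toEuclideanLin B x = toEuclideanLin D x := fun h => by
    rw [← sub_eq_zero, ← LinearMap.sub_apply, ← map_sub, toLpLin_apply, ofLp_toLp, h, toLp_zero]
  refine le_of_mul_le_mul_right ?_ hx
  calc lamMin (Aᴴ * A + Eᴴ * E) * ‖x‖ ^ 2
      ≤ (⟪x, toEuclideanLin (Aᴴ * A + Eᴴ * E) x⟫_ℂ).re := hH.lamMin_mul_norm_sq_le x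
    _ = ‖toEuclideanLin DA x‖ ^ 2 + ‖toEuclideanLin DE x‖ ^ 2 := by
      rw [re_inner_toEuclideanLin_gram, hperturb hA, hperturb hE]
    _ ≤ (specNorm DA * ‖x‖) ^ 2 + (specNorm DE * ‖x‖) ^ 2 := by
      gcongr <;> exact norm_toEuclideanLin_le_specNorm _ _
    _ = (specNorm DA ^ 2 + specNorm DE ^ 2) * ‖x‖ ^ 2 := by ring

lemma exists_mulVec_eq_zero_specNorm_sq_add_eq_lamMin_gram [Nonempty ι] (A E : Matrix ι ι ℂ) :
    ∃ (DA DE : Matrix ι ι ℂ) (v : ι → ℂ), v ≠ 0 ∧ (A - DA) *ᵥ v = 0 ∧ (E - DE) *ᵥ v = 0 ∧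
      specNorm DA ^ 2 + specNorm DE ^ 2 = lamMin (Aᴴ * A + Eᴴ * E) := by
  have hH := (isHermitian_conjTranspose_mul_self A).add (isHermitian_conjTranspose_mul_self E)
  obtain ⟨i, hi⟩ := hH.exists_eigenvalues_eq_lamMin
  set x := hH.eigenvectorBasis i
  have hx : ‖x‖ = 1 := hH.eigenvectorBasis.orthonormal.1 i
  have hxx : star (ofLp x) ⬝ᵥ ofLp x = 1 := by
    rw [dotProduct_comm, ← EuclideanSpace.inner_eq_star_dotProduct, inner_self_eq_norm_sq_to_K, hx]
    simp
  refine ⟨vecMulVec (toEuclideanLin A x) (star x), vecMulVec (toEuclideanLin E x) (star x), x,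
    by simpa using hH.eigenvectorBasis.orthonormal.ne_zero i, A.sub_vecMulVec_mulVec_self hxx,
    E.sub_vecMulVec_mulVec_self hxx, ?_⟩
  rw [specNorm_vecMulVec_star, specNorm_vecMulVec_star, hx, mul_one, mul_one,
    ← re_inner_toEuclideanLin_gram, hH.toEuclideanLin_eigenvectorBasis, inner_smul_right,
    inner_self_eq_norm_sq_to_K, hx, hi]
  simp

end Matrix

theorem unstructured_distance_to_common_null_space_general
    {n : ℕ} (A E : Matrix (Fin n) (Fin n) ℂ) :
    sInf {r : ℝ | ∃ (DA DE : Matrix (Fin n) (Fin n) ℂ) (v : Fin n → ℂ),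
        v ≠ 0 ∧ (A - DA).mulVec v = 0 ∧ (E - DE).mulVec v = 0 ∧
        r = Real.sqrt (specNorm DA ^ 2 + specNorm DE ^ 2)} =
      Real.sqrt (lamMin (Aᴴ * A + Eᴴ * E)) := by
  rcases isEmpty_or_nonempty (Fin n) with hn | hn
  · rw [lamMin_of_isEmpty, Real.sqrt_zero, ← Real.sInf_empty]
    congr 1
    exact Set.eq_empty_of_forall_notMem fun _ ⟨_, _, v, hv, _⟩ => hv (Subsingleton.elim v 0)
  · refine IsLeast.csInf_eq ⟨?_, ?_⟩
    · obtain ⟨DA, DE, v, hv, hA, hE, h⟩ :=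
        exists_mulVec_eq_zero_specNorm_sq_add_eq_lamMin_gram A E
      exact ⟨DA, DE, v, hv, hA, hE, by rw [h]⟩
    · rintro r ⟨DA, DE, v, hv, hA, hE, rfl⟩
      exact Real.sqrt_le_sqrt (lamMin_gram_le_specNorm_sq_add_of_mulVec_eq_zero hv hA hE)

/-- Unstructured distance to a common null space:
`δ₀(A,E) = √(λ_min(AᴴA + EᴴE))`. -/
theorem unstructured_distance_to_common_null_space
    {n : ℕ} (A E : Matrix (Fin n) (Fin n) ℂ)
    (hreg : ∃ l : ℂ, (A + l • E).det ≠ 0) :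
    sInf {r : ℝ | ∃ (DA DE : Matrix (Fin n) (Fin n) ℂ) (v : Fin n → ℂ),
        v ≠ 0 ∧ (A - DA).mulVec v = 0 ∧ (E - DE).mulVec v = 0 ∧
        r = Real.sqrt (specNorm DA ^ 2 + specNorm DE ^ 2)} =
      Real.sqrt (lamMin (Aᴴ * A + Eᴴ * E)) :=
  unstructured_distance_to_common_null_space_general A E
end

section
/- Let x, y ∈ ℂⁿ with x ≠ 0. There exists a Hermitian matrix H ∈ ℂ^{n×n} with Hx = y if and only if xᴴy is real (Im(xᴴy) = 0). Moreover, if this condition holds, then the minimum of ‖H‖ over all Hermitian H with Hx = y equals ‖y‖/‖x‖, where ‖H‖ is the spectral norm and ‖·‖ on vectors is the Euclidean norm. -/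
open Matrix

/-!
A self-adjoint `T` has `⟪x, T x⟫` real, and `‖T x‖ ≤ ‖T‖ ‖x‖` bounds `‖T‖` below by
`ρ = ‖y‖ / ‖x‖`. Conversely, if `⟪x, y⟫` is real then `ρ x` and `y` have equal norms and a real
inner product, so the Householder reflection in `(ρ x - y)ᗮ` swaps them; `ρ` times this
reflection is self-adjoint, sends `x` to `y` and has norm at most `ρ`.
-/

open RCLike

namespace Submodule

variable {𝕜 E : Type*} [RCLike 𝕜] [NormedAddCommGroup E] [InnerProductSpace 𝕜 E]

theorem reflection_sub_of_im_inner_eq_zero {v w : E} (h : ‖v‖ = ‖w‖)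
    (hvw : im (inner 𝕜 v w) = 0) :
    reflection (𝕜 ∙ (v - w))ᗮ v = w := by
  set R : E ≃ₗᵢ[𝕜] E := reflection (𝕜 ∙ (v - w))ᗮ
  suffices R v + R v = w + w by
    apply smul_right_injective E (by simp : (2 : 𝕜) ≠ 0)
    simpa [two_smul] using this
  have h₁ : R (v - w) = -(v - w) := reflection_orthogonalComplement_singleton_eq_neg (v - w)
  have h₂ : R (v + w) = v + w := by
    apply reflection_mem_subspace_eq_self
    rw [mem_orthogonal_singleton_iff_inner_left, inner_add_left, inner_sub_right, inner_sub_right,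
      inner_self_eq_norm_sq_to_K, inner_self_eq_norm_sq_to_K, h, ← inner_conj_symm w v,
      conj_eq_iff_im.mpr hvw]
    ring
  convert congr_arg₂ (· + ·) h₂ h₁ using 1
  · simp
  · abel

theorem isSelfAdjoint_reflection [CompleteSpace E] (K : Submodule 𝕜 E)
    [K.HasOrthogonalProjection] :
    IsSelfAdjoint K.reflection.toLinearIsometry.toContinuousLinearMap := by
  refine ContinuousLinearMap.isSelfAdjoint_iff_isSymmetric.mpr fun x y => ?_
  simp only [ContinuousLinearMap.coe_coe, LinearIsometry.coe_toContinuousLinearMap,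
    LinearIsometryEquiv.coe_toLinearIsometry, reflection_apply, inner_sub_left, inner_sub_right,
    two_smul, inner_add_left, inner_add_right, inner_starProjection_left_eq_right]

end Submodule

namespace ContinuousLinearMap

variable {𝕜 E : Type*} [RCLike 𝕜] [NormedAddCommGroup E] [InnerProductSpace 𝕜 E] [CompleteSpace E]

theorem exists_isSelfAdjoint_apply_eq_of_im_inner_eq_zero {x y : E} (hx : x ≠ 0)
    (hxy : im (inner 𝕜 x y) = 0) :
    ∃ T : E →L[𝕜] E, IsSelfAdjoint T ∧ T x = y ∧ ‖T‖ ≤ ‖y‖ / ‖x‖ := by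
  set ρ := ‖y‖ / ‖x‖
  have hρ : 0 ≤ ρ := by positivity
  set u : E := (ρ : 𝕜) • x
  have hu : ‖u‖ = ‖y‖ := by
    rw [norm_smul, norm_ofReal, abs_of_nonneg hρ, div_mul_cancel₀ _ (norm_ne_zero_iff.mpr hx)]
  have huy : im (inner 𝕜 u y) = 0 := by
    rw [inner_smul_left, conj_ofReal, im_ofReal_mul, hxy, mul_zero]
  set R := (𝕜 ∙ (u - y))ᗮ.reflection
  refine ⟨(ρ : 𝕜) • R.toLinearIsometry.toContinuousLinearMap,
    IsSelfAdjoint.smul (conj_ofReal ρ) (Submodule.isSelfAdjoint_reflection _), ?_, ?_⟩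
  · simp only [_root_.smul_apply, LinearIsometry.coe_toContinuousLinearMap,
      LinearIsometryEquiv.coe_toLinearIsometry, ← map_smul]
    exact Submodule.reflection_sub_of_im_inner_eq_zero hu huy
  · calc ‖(ρ : 𝕜) • R.toLinearIsometry.toContinuousLinearMap‖
        ≤ ρ * ‖R.toLinearIsometry.toContinuousLinearMap‖ := by
          rw [norm_smul, norm_ofReal, abs_of_nonneg hρ]
      _ ≤ ρ := mul_le_of_le_one_right hρ (LinearIsometry.norm_toContinuousLinearMap_le _)

theorem exists_isSelfAdjoint_apply_eq_iff {x y : E} (hx : x ≠ 0) :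
    (∃ T : E →L[𝕜] E, IsSelfAdjoint T ∧ T x = y) ↔ im (inner 𝕜 x y) = 0 := by
  refine ⟨?_, fun hxy => ?_⟩
  · rintro ⟨T, hT, rfl⟩
    exact hT.isSymmetric.im_inner_self_apply x
  · obtain ⟨T, hT, hTx, -⟩ := exists_isSelfAdjoint_apply_eq_of_im_inner_eq_zero hx hxy
    exact ⟨T, hT, hTx⟩

theorem isLeast_norm_isSelfAdjoint_apply_eq {x y : E} (hx : x ≠ 0) (hxy : im (inner 𝕜 x y) = 0) :
    IsLeast {r | ∃ T : E →L[𝕜] E, IsSelfAdjoint T ∧ T x = y ∧ r = ‖T‖} (‖y‖ / ‖x‖) := by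
  obtain ⟨T, hT, hTx, hTle⟩ := exists_isSelfAdjoint_apply_eq_of_im_inner_eq_zero hx hxy
  have lower : ‖y‖ / ‖x‖ ∈ lowerBounds
      {r | ∃ T : E →L[𝕜] E, IsSelfAdjoint T ∧ T x = y ∧ r = ‖T‖} := by
    rintro _ ⟨T, -, rfl, rfl⟩
    exact T.ratio_le_opNorm x
  exact ⟨⟨T, hT, hTx, le_antisymm (lower ⟨T, hT, hTx, rfl⟩) hTle⟩, lower⟩

end ContinuousLinearMap

namespace Matrix

variable {𝕜 k : Type*} [RCLike 𝕜] [Fintype k] [DecidableEq k]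

theorem isHermitian_iff_isSelfAdjoint_toEuclideanCLM (H : Matrix k k 𝕜) :
    H.IsHermitian ↔ IsSelfAdjoint (toEuclideanCLM (𝕜 := 𝕜) H) := by
  rw [isHermitian_iff_isSelfAdjoint, IsSelfAdjoint, IsSelfAdjoint, ← map_star,
    EmbeddingLike.apply_eq_iff_eq]

theorem mulVec_eq_iff_toEuclideanCLM_apply_eq (H : Matrix k k 𝕜) (x y : EuclideanSpace 𝕜 k) :
    H *ᵥ x = y ↔ toEuclideanCLM (𝕜 := 𝕜) H x = y := by
  rw [← (WithLp.ofLp_injective 2).eq_iff, ofLp_toEuclideanCLM]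

theorem exists_isHermitian_mulVec_eq_and_iff (x y : EuclideanSpace 𝕜 k)
    (P : (EuclideanSpace 𝕜 k →L[𝕜] EuclideanSpace 𝕜 k) → Prop) :
    (∃ H : Matrix k k 𝕜, H.IsHermitian ∧ H *ᵥ x = y ∧ P (toEuclideanCLM (𝕜 := 𝕜) H)) ↔
      ∃ T, IsSelfAdjoint T ∧ T x = y ∧ P T := by
  simp only [isHermitian_iff_isSelfAdjoint_toEuclideanCLM, mulVec_eq_iff_toEuclideanCLM_apply_eq]
  exact (EquivLike.surjective (toEuclideanCLM (n := k) (𝕜 := 𝕜))).exists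
    (p := fun T => IsSelfAdjoint T ∧ T x = y ∧ P T) |>.symm

end Matrix

/-- Hermitian mapping lemma: for `x ≠ 0` there is a Hermitian `H` with `Hx = y`
iff `xᴴy` is real, in which case the minimal spectral norm of such `H` is
`‖y‖/‖x‖`. -/
theorem hermitian_mapping {n : ℕ} (x y : EuclideanSpace ℂ (Fin n)) (hx : x ≠ 0) :
    ((∃ H : Matrix (Fin n) (Fin n) ℂ, H.IsHermitian ∧ H.mulVec x = y) ↔
      (inner ℂ x y : ℂ).im = 0) ∧
    ((inner ℂ x y : ℂ).im = 0 →
      IsLeast {r : ℝ | ∃ H : Matrix (Fin n) (Fin n) ℂ,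
          H.IsHermitian ∧ H.mulVec x = y ∧ r = specNorm H}
        (‖y‖ / ‖x‖)) := by
  have hExists := exists_isHermitian_mulVec_eq_and_iff x y fun _ => True
  simp only [and_true] at hExists
  have hNorms : {r : ℝ | ∃ H : Matrix (Fin n) (Fin n) ℂ,
      H.IsHermitian ∧ H.mulVec x = y ∧ r = specNorm H} =
      {r | ∃ T : EuclideanSpace ℂ (Fin n) →L[ℂ] EuclideanSpace ℂ (Fin n),
        IsSelfAdjoint T ∧ T x = y ∧ r = ‖T‖} :=
    Set.ext fun r => exists_isHermitian_mulVec_eq_and_iff x y (r = ‖·‖)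
  rw [hExists, hNorms]
  exact ⟨ContinuousLinearMap.exists_isSelfAdjoint_apply_eq_iff hx,
    fun hxy => ContinuousLinearMap.isLeast_norm_isSelfAdjoint_apply_eq hx hxy⟩
end

section
/- Let x, y, z ∈ ℂⁿ with x ≠ 0. There exists a matrix Δ ∈ ℂ^{n×n} such that Δx = y and Δᴴx = z if and only if xᴴy = zᴴx. Moreover, if this condition holds, then the minimum of ‖Δ‖ over all Δ ∈ ℂ^{n×n} with Δx = y and Δᴴx = z equals max{‖y‖/‖x‖, ‖z‖/‖x‖}, where ‖Δ‖ is the spectral norm. -/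
open Matrix

/-!
The conditions are necessary because `⟪z, x⟫ = ⟪Δᴴx, x⟫ = ⟪x, Δx⟫ = ⟪x, y⟫`, and because
`‖y‖, ‖z‖ ≤ ‖Δ‖ ‖x‖` as `‖Δᴴ‖ = ‖Δ‖`.

For the construction scale to `‖x‖ = 1` and, exchanging `Δ` with `Δᴴ`, assume `‖y‖ ≤ ‖z‖`.
Write `y = αx + y₁`, `z = ᾱx + z₁` with `y₁, z₁ ⊥ x`, so that `‖y₁‖ ≤ ‖z₁‖`. If `z₁ = 0` then
`y₁ = 0` and `Δ = x zᴴ` works. Otherwise take `Δ = x zᴴ + y₁ bᴴ`, where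
`b = x - (⟪z, x⟫ / ‖z₁‖²) z₁` satisfies `⟪b, x⟫ = 1`, `b ⊥ z` and `‖b‖ ‖z₁‖ = ‖z‖`. Then
`‖Δv‖² = |⟪z, v⟫|² + ‖y₁‖² |⟪b, v⟫|² ≤ |⟪z, v⟫|² + ‖z‖² |⟪b / ‖b‖, v⟫|² ≤ ‖z‖² ‖v‖²`,
the last step being Bessel's inequality for the orthogonal pair `z`, `b`.
-/

open InnerProductSpace ContinuousLinearMap
open scoped InnerProductSpace

section

variable {𝕜 E : Type*} [RCLike 𝕜] [NormedAddCommGroup E] [InnerProductSpace 𝕜 E]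

theorem inner_sub_inner_smul_self_eq_zero {x : E} (hx : ‖x‖ = 1) (y : E) :
    ⟪x, y - ⟪x, y⟫_𝕜 • x⟫_𝕜 = 0 := by
  simp [inner_sub_right, inner_smul_right, inner_self_eq_norm_sq_to_K, hx]

theorem norm_sq_eq_norm_inner_sq_add_norm_sub_sq {x : E} (hx : ‖x‖ = 1) (y : E) :
    ‖y‖ ^ 2 = ‖⟪x, y⟫_𝕜‖ ^ 2 + ‖y - ⟪x, y⟫_𝕜 • x‖ ^ 2 := by
  have h := norm_add_sq_eq_norm_sq_add_norm_sq_of_inner_eq_zero (⟪x, y⟫_𝕜 • x) (y - ⟪x, y⟫_𝕜 • x)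
    (by rw [inner_smul_left, inner_sub_inner_smul_self_eq_zero hx, mul_zero])
  rw [add_sub_cancel, norm_smul, hx, mul_one] at h
  simpa only [sq] using h

theorem norm_inner_sq_add_sq_mul_norm_inner_sq_le {u z : E} (hu : ‖u‖ = 1) (huz : ⟪u, z⟫_𝕜 = 0)
    (v : E) : ‖⟪z, v⟫_𝕜‖ ^ 2 + ‖z‖ ^ 2 * ‖⟪u, v⟫_𝕜‖ ^ 2 ≤ ‖z‖ ^ 2 * ‖v‖ ^ 2 := by
  set w := v - ⟪u, v⟫_𝕜 • u
  have hzu : ⟪z, u⟫_𝕜 = 0 := inner_eq_zero_symm.mp huz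
  have hzw : ⟪z, w⟫_𝕜 = ⟪z, v⟫_𝕜 := by simp [w, inner_sub_right, inner_smul_right, hzu]
  have hcs : ‖⟪z, w⟫_𝕜‖ ≤ ‖z‖ * ‖w‖ := norm_inner_le_norm (𝕜 := 𝕜) z w
  rw [norm_sq_eq_norm_inner_sq_add_norm_sub_sq (𝕜 := 𝕜) hu v, ← hzw]
  nlinarith [norm_nonneg ⟪z, w⟫_𝕜]

theorem exists_inner_eq_one_inner_eq_zero {x z : E} (hx : ‖x‖ = 1) (hz : z - ⟪x, z⟫_𝕜 • x ≠ 0) :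
    ∃ b : E, ⟪b, x⟫_𝕜 = 1 ∧ ⟪b, z⟫_𝕜 = 0 ∧ ‖b‖ * ‖z - ⟪x, z⟫_𝕜 • x‖ = ‖z‖ := by
  set z₁ := z - ⟪x, z⟫_𝕜 • x
  have hz₁ : ‖z₁‖ ≠ 0 := norm_ne_zero_iff.mpr hz
  have hz₁' : (‖z₁‖ : 𝕜) ≠ 0 := RCLike.ofReal_ne_zero.mpr hz₁
  have hxz₁ : ⟪x, z₁⟫_𝕜 = 0 := inner_sub_inner_smul_self_eq_zero hx z
  have hz₁x : ⟪z₁, x⟫_𝕜 = 0 := inner_eq_zero_symm.mp hxz₁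
  have hz₁z : ⟪z₁, z⟫_𝕜 = (‖z₁‖ : 𝕜) ^ 2 := by
    conv_lhs => rw [← sub_add_cancel z (⟪x, z⟫_𝕜 • x)]
    rw [inner_add_right, inner_smul_right, hz₁x, mul_zero, add_zero, inner_self_eq_norm_sq_to_K]
  set c : 𝕜 := ⟪z, x⟫_𝕜 / (‖z₁‖ : 𝕜) ^ 2
  refine ⟨x - c • z₁, ?_, ?_, ?_⟩
  · simp [inner_sub_left, inner_smul_left, hz₁x, inner_self_eq_norm_sq_to_K, hx]
  · rw [inner_sub_left, inner_smul_left, hz₁z]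
    simp only [c, map_div₀, map_pow, RCLike.conj_ofReal, inner_conj_symm]
    rw [div_mul_cancel₀ _ (pow_ne_zero 2 hz₁'), sub_self]
  · have hpyth := norm_add_sq_eq_norm_sq_add_norm_sq_of_inner_eq_zero (𝕜 := 𝕜) x (-c • z₁)
      (by rw [inner_smul_right, hxz₁, mul_zero])
    have hz : ‖z‖ ^ 2 = ‖⟪x, z⟫_𝕜‖ ^ 2 + ‖z₁‖ ^ 2 := norm_sq_eq_norm_inner_sq_add_norm_sub_sq hx z
    rw [neg_smul, ← sub_eq_add_neg, norm_neg, norm_smul, hx] at hpyth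
    have hc : ‖c‖ * ‖z₁‖ ^ 2 = ‖⟪x, z⟫_𝕜‖ := by
      simp only [c, norm_div, norm_pow, RCLike.norm_ofReal, abs_norm, norm_inner_symm]
      field_simp
    refine (sq_eq_sq₀ (by positivity) (norm_nonneg z)).mp ?_
    calc (‖x - c • z₁‖ * ‖z₁‖) ^ 2 = ‖z₁‖ ^ 2 + (‖c‖ * ‖z₁‖ ^ 2) ^ 2 := by
          rw [mul_pow, sq, hpyth]; ring
      _ = ‖z‖ ^ 2 := by rw [hc, hz]; ring

theorem norm_rankOne_add_rankOne_le {x z w b : E} (hx : ‖x‖ = 1) (hxw : ⟪x, w⟫_𝕜 = 0)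
    (hb : b ≠ 0) (hbz : ⟪b, z⟫_𝕜 = 0) (hwb : ‖w‖ * ‖b‖ ≤ ‖z‖) :
    ‖rankOne 𝕜 x z + rankOne 𝕜 w b‖ ≤ ‖z‖ := by
  refine opNorm_le_bound _ (norm_nonneg z) fun v => ?_
  set u := (‖b‖⁻¹ : 𝕜) • b
  have hb' : ‖b‖ ≠ 0 := norm_ne_zero_iff.mpr hb
  have hu : ‖u‖ = 1 := norm_smul_inv_norm hb
  have huz : ⟪u, z⟫_𝕜 = 0 := by simp [u, inner_smul_left, hbz]
  have hbv : ‖⟪b, v⟫_𝕜‖ = ‖b‖ * ‖⟪u, v⟫_𝕜‖ := by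
    simp only [u, inner_smul_left, norm_mul, map_inv₀, RCLike.conj_ofReal, norm_inv,
      RCLike.norm_ofReal, abs_norm]
    field_simp
  have hpyth : ‖(rankOne 𝕜 x z + rankOne 𝕜 w b) v‖ ^ 2
      = ‖⟪z, v⟫_𝕜‖ ^ 2 + ‖⟪b, v⟫_𝕜‖ ^ 2 * ‖w‖ ^ 2 := by
    have := norm_add_sq_eq_norm_sq_add_norm_sq_of_inner_eq_zero (𝕜 := 𝕜)
      (⟪z, v⟫_𝕜 • x) (⟪b, v⟫_𝕜 • w) (by simp [inner_smul_left, inner_smul_right, hxw])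
    rw [_root_.add_apply, rankOne_apply, rankOne_apply, sq, this, norm_smul, norm_smul, hx]
    ring
  have key : ‖⟪b, v⟫_𝕜‖ ^ 2 * ‖w‖ ^ 2 ≤ ‖z‖ ^ 2 * ‖⟪u, v⟫_𝕜‖ ^ 2 := by
    calc ‖⟪b, v⟫_𝕜‖ ^ 2 * ‖w‖ ^ 2 = (‖w‖ * ‖b‖) ^ 2 * ‖⟪u, v⟫_𝕜‖ ^ 2 := by rw [hbv]; ring
      _ ≤ ‖z‖ ^ 2 * ‖⟪u, v⟫_𝕜‖ ^ 2 := by gcongr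
  apply le_of_pow_le_pow_left₀ two_ne_zero (by positivity)
  rw [hpyth, mul_pow]
  linarith [norm_inner_sq_add_sq_mul_norm_inner_sq_le hu huz v]

variable [CompleteSpace E]

theorem exists_apply_eq_adjoint_apply_eq_of_norm_le {x y z : E} (hx : ‖x‖ = 1)
    (hyz : ‖y‖ ≤ ‖z‖) (h : ⟪x, y⟫_𝕜 = ⟪z, x⟫_𝕜) :
    ∃ T : E →L[𝕜] E, T x = y ∧ adjoint T x = z ∧ ‖T‖ ≤ ‖z‖ := by
  set y₁ := y - ⟪x, y⟫_𝕜 • x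
  set z₁ := z - ⟪x, z⟫_𝕜 • x
  have hxx : ⟪x, x⟫_𝕜 = 1 := by simp [inner_self_eq_norm_sq_to_K, hx]
  have hy₁x : ⟪y₁, x⟫_𝕜 = 0 := inner_eq_zero_symm.mp (inner_sub_inner_smul_self_eq_zero hx y)
  have hy : ⟪x, y⟫_𝕜 • x + y₁ = y := add_sub_cancel _ _
  have hy₁z₁ : ‖y₁‖ ≤ ‖z₁‖ := by
    have hyx : ‖⟪x, y⟫_𝕜‖ = ‖⟪x, z⟫_𝕜‖ := by rw [h, norm_inner_symm]
    have := pow_le_pow_left₀ (norm_nonneg y) hyz 2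
    rw [norm_sq_eq_norm_inner_sq_add_norm_sub_sq (𝕜 := 𝕜) hx y,
      norm_sq_eq_norm_inner_sq_add_norm_sub_sq (𝕜 := 𝕜) hx z, hyx] at this
    exact le_of_pow_le_pow_left₀ two_ne_zero (norm_nonneg _) (by linarith)
  by_cases hz₁ : z₁ = 0
  · have hy₁ : y₁ = 0 := norm_eq_zero.mp (le_antisymm (by simpa [hz₁] using hy₁z₁) (norm_nonneg _))
    refine ⟨rankOne 𝕜 x z, ?_, ?_, ?_⟩
    · rw [rankOne_apply, ← h]
      simpa [hy₁] using hy
    · rw [adjoint_rankOne, rankOne_apply, hxx, one_smul]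
    · rw [norm_rankOne, hx, one_mul]
  · obtain ⟨b, hbx, hbz, hb⟩ := exists_inner_eq_one_inner_eq_zero hx hz₁
    refine ⟨rankOne 𝕜 x z + rankOne 𝕜 y₁ b, ?_, ?_, ?_⟩
    · rw [_root_.add_apply, rankOne_apply, rankOne_apply, hbx, one_smul, ← h, hy]
    · rw [map_add, adjoint_rankOne, adjoint_rankOne, _root_.add_apply, rankOne_apply,
        rankOne_apply, hxx, hy₁x, one_smul, zero_smul, add_zero]
    · refine norm_rankOne_add_rankOne_le hx (inner_sub_inner_smul_self_eq_zero hx y)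
        (fun h0 => by simp [h0] at hbx) hbz ?_
      rw [← hb, mul_comm ‖b‖]
      exact mul_le_mul_of_nonneg_right hy₁z₁ (norm_nonneg b)

theorem exists_apply_eq_adjoint_apply_eq_of_norm_eq_one {x y z : E} (hx : ‖x‖ = 1)
    (h : ⟪x, y⟫_𝕜 = ⟪z, x⟫_𝕜) :
    ∃ T : E →L[𝕜] E, T x = y ∧ adjoint T x = z ∧ ‖T‖ ≤ max ‖y‖ ‖z‖ := by
  rcases le_total ‖y‖ ‖z‖ with hyz | hzy
  · obtain ⟨T, hTx, hT'x, hT⟩ := exists_apply_eq_adjoint_apply_eq_of_norm_le hx hyz h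
    exact ⟨T, hTx, hT'x, hT.trans (le_max_right _ _)⟩
  · have h' : ⟪x, z⟫_𝕜 = ⟪y, x⟫_𝕜 := by rw [← inner_conj_symm, ← h, inner_conj_symm]
    obtain ⟨T, hTx, hT'x, hT⟩ := exists_apply_eq_adjoint_apply_eq_of_norm_le hx hzy h'
    refine ⟨adjoint T, hT'x, by rwa [adjoint_adjoint], ?_⟩
    rw [LinearIsometryEquiv.norm_map]
    exact hT.trans (le_max_left _ _)

theorem exists_apply_eq_adjoint_apply_eq {x y z : E} (hx : x ≠ 0) (h : ⟪x, y⟫_𝕜 = ⟪z, x⟫_𝕜) :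
    ∃ T : E →L[𝕜] E, T x = y ∧ adjoint T x = z ∧ ‖T‖ ≤ max (‖y‖ / ‖x‖) (‖z‖ / ‖x‖) := by
  set c : 𝕜 := (‖x‖⁻¹ : 𝕜)
  have hc : c ≠ 0 := by simpa [c] using hx
  have hcx : ‖c • x‖ = 1 := norm_smul_inv_norm hx
  have hcv (v : E) : ‖c • v‖ = ‖v‖ / ‖x‖ := by
    rw [norm_smul, div_eq_inv_mul]; simp [c]
  have h' : ⟪c • x, c • y⟫_𝕜 = ⟪c • z, c • x⟫_𝕜 := by
    simp only [inner_smul_left, inner_smul_right, h]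
  obtain ⟨T, hTx, hT'x, hT⟩ := exists_apply_eq_adjoint_apply_eq_of_norm_eq_one hcx h'
  rw [map_smul] at hTx hT'x
  exact ⟨T, smul_right_injective E hc hTx, smul_right_injective E hc hT'x, by rwa [hcv, hcv] at hT⟩

theorem inner_eq_of_apply_eq_adjoint_apply_eq {T : E →L[𝕜] E} {x y z : E} (hy : T x = y)
    (hz : adjoint T x = z) : ⟪x, y⟫_𝕜 = ⟪z, x⟫_𝕜 := by
  rw [← hy, ← hz, adjoint_inner_left]

theorem max_div_norm_le_opNorm {T : E →L[𝕜] E} {x y z : E} (hy : T x = y)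
    (hz : adjoint T x = z) : max (‖y‖ / ‖x‖) (‖z‖ / ‖x‖) ≤ ‖T‖ := by
  refine max_le (div_le_of_le_mul₀ (norm_nonneg x) (norm_nonneg T) ?_)
    (div_le_of_le_mul₀ (norm_nonneg x) (norm_nonneg T) ?_)
  · exact hy ▸ T.le_opNorm x
  · rw [← hz, ← LinearIsometryEquiv.norm_map adjoint T]
    exact (adjoint T).le_opNorm x

theorem isLeast_opNorm_of_apply_eq_adjoint_apply_eq {x y z : E} (hx : x ≠ 0)
    (h : ⟪x, y⟫_𝕜 = ⟪z, x⟫_𝕜) :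
    IsLeast {r : ℝ | ∃ T : E →L[𝕜] E, T x = y ∧ adjoint T x = z ∧ r = ‖T‖}
      (max (‖y‖ / ‖x‖) (‖z‖ / ‖x‖)) := by
  obtain ⟨T, hy, hz, hT⟩ := exists_apply_eq_adjoint_apply_eq hx h
  refine ⟨⟨T, hy, hz, le_antisymm (max_div_norm_le_opNorm hy hz) hT⟩, ?_⟩
  rintro r ⟨T, hy, hz, rfl⟩
  exact max_div_norm_le_opNorm hy hz

end

namespace Matrix

variable {𝕜 n : Type*} [RCLike 𝕜] [Fintype n] [DecidableEq n]

theorem mulVec_ofLp_eq_ofLp_iff (D : Matrix n n 𝕜) (x y : EuclideanSpace 𝕜 n) :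
    D *ᵥ x.ofLp = y.ofLp ↔ toEuclideanCLM (𝕜 := 𝕜) D x = y := by
  rw [← ofLp_toEuclideanCLM, (WithLp.ofLp_injective 2).eq_iff]

theorem toEuclideanCLM_conjTranspose (D : Matrix n n 𝕜) :
    toEuclideanCLM (𝕜 := 𝕜) Dᴴ = adjoint (toEuclideanCLM (𝕜 := 𝕜) D) := by
  rw [← star_eq_adjoint, ← map_star, star_eq_conjTranspose]

end Matrix

/-- Two-sided mapping lemma: for `x ≠ 0` there exists `Δ` with `Δx = y` and
`Δᴴx = z` iff `xᴴy = zᴴx`, in which case the minimal spectral norm of such `Δ`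
is `max{‖y‖/‖x‖, ‖z‖/‖x‖}`. -/
theorem two_sided_mapping {n : ℕ} (x y z : EuclideanSpace ℂ (Fin n)) (hx : x ≠ 0) :
    ((∃ D : Matrix (Fin n) (Fin n) ℂ, D.mulVec x = y ∧ Dᴴ.mulVec x = z) ↔
      (inner ℂ x y : ℂ) = (inner ℂ z x : ℂ)) ∧
    ((inner ℂ x y : ℂ) = (inner ℂ z x : ℂ) →
      IsLeast {r : ℝ | ∃ D : Matrix (Fin n) (Fin n) ℂ,
          D.mulVec x = y ∧ Dᴴ.mulVec x = z ∧ r = specNorm D}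
        (max (‖y‖ / ‖x‖) (‖z‖ / ‖x‖))) := by
  simp only [mulVec_ofLp_eq_ofLp_iff, toEuclideanCLM_conjTranspose, specNorm]
  have hsurj : Function.Surjective (toEuclideanCLM (n := Fin n) (𝕜 := ℂ)) :=
    EquivLike.surjective _
  refine ⟨⟨fun ⟨_, hy, hz⟩ => inner_eq_of_apply_eq_adjoint_apply_eq hy hz, fun h => ?_⟩,
    fun h => ?_⟩
  · obtain ⟨T, hy, hz, -⟩ := exists_apply_eq_adjoint_apply_eq hx h
    obtain ⟨D, rfl⟩ := hsurj T
    exact ⟨D, hy, hz⟩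
  · convert isLeast_opNorm_of_apply_eq_adjoint_apply_eq hx h using 3
    exact (hsurj.exists (p := fun T => T x = y ∧ adjoint T x = z ∧ _ = ‖T‖)).symm
end

section
/- Let J, R, E ∈ ℂ^{n×n} with J skew-Hermitian (Jᴴ = −J), R Hermitian positive semidefinite, and E Hermitian positive semidefinite. Then ker(E) ∩ ker(J − R) = ker(E) ∩ ker(R) ∩ ker(J). -/
open Matrix
open scoped ComplexOrder

/-
If `(J - R) v = 0`, the number `a = v* R v = v* J v` is real because `R` is Hermitian and purely
imaginary because `J` is skew-Hermitian, so `a = 0`; positive semidefiniteness of `R` then forces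
`R v = 0`, hence also `J v = R v = 0`.
-/

namespace Matrix

variable {ι 𝕜 : Type*} [Fintype ι]

lemma star_star_dotProduct_mulVec [CommSemiring 𝕜] [StarRing 𝕜] (M : Matrix ι ι 𝕜) (v : ι → 𝕜) :
    star (star v ⬝ᵥ M *ᵥ v) = star v ⬝ᵥ Mᴴ *ᵥ v := by
  rw [star_dotProduct, star_star, star_mulVec, dotProduct_mulVec, ← dotProduct_mulVec]

variable [RCLike 𝕜] {J R : Matrix ι ι 𝕜}

lemma PosSemidef.mulVec_eq_zero_of_sub_mulVec_eq_zero (hJ : Jᴴ = -J) (hR : R.PosSemidef)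
    {v : ι → 𝕜} (hv : (J - R) *ᵥ v = 0) : R *ᵥ v = 0 := by
  have hJR : J *ᵥ v = R *ᵥ v := sub_eq_zero.mp (by rwa [sub_mulVec] at hv)
  have h_real : star (star v ⬝ᵥ R *ᵥ v) = star v ⬝ᵥ R *ᵥ v := by
    rw [star_star_dotProduct_mulVec, hR.isHermitian.eq]
  have h_imag : star (star v ⬝ᵥ R *ᵥ v) = -(star v ⬝ᵥ R *ᵥ v) := by
    rw [← hJR, star_star_dotProduct_mulVec, hJ, neg_mulVec, dotProduct_neg]
  have ha : star v ⬝ᵥ R *ᵥ v = 0 := self_eq_neg.mp (h_real.symm.trans h_imag)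
  exact (hR.dotProduct_mulVec_zero_iff v).mp ha

lemma PosSemidef.sub_mulVec_eq_zero_iff (hJ : Jᴴ = -J) (hR : R.PosSemidef) (v : ι → 𝕜) :
    (J - R) *ᵥ v = 0 ↔ R *ᵥ v = 0 ∧ J *ᵥ v = 0 := by
  refine ⟨fun hv ↦ ?_, fun ⟨hRv, hJv⟩ ↦ by rw [sub_mulVec, hRv, hJv, sub_zero]⟩
  have hRv := hR.mulVec_eq_zero_of_sub_mulVec_eq_zero hJ hv
  exact ⟨hRv, by rwa [sub_mulVec, hRv, sub_zero] at hv⟩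

end Matrix

theorem DH_common_kernel_general {n : ℕ} (J R E : Matrix (Fin n) (Fin n) ℂ)
    (hJ : Jᴴ = -J) (hR : R.PosSemidef) :
    ∀ v : Fin n → ℂ,
      (E.mulVec v = 0 ∧ (J - R).mulVec v = 0) ↔
      (E.mulVec v = 0 ∧ R.mulVec v = 0 ∧ J.mulVec v = 0) := fun v ↦
  and_congr_right' (hR.sub_mulVec_eq_zero_iff hJ v)

/-- For a DH pencil `sE + (J − R)` one has
`ker(E) ∩ ker(J − R) = ker(E) ∩ ker(R) ∩ ker(J)`. -/
theorem DH_common_kernel {n : ℕ} (J R E : Matrix (Fin n) (Fin n) ℂ)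
    (hJ : Jᴴ = -J) (hR : R.PosSemidef) (hE : E.PosSemidef) :
    ∀ v : Fin n → ℂ,
      (E.mulVec v = 0 ∧ (J - R).mulVec v = 0) ↔
      (E.mulVec v = 0 ∧ R.mulVec v = 0 ∧ J.mulVec v = 0) :=
  DH_common_kernel_general J R E hJ hR
end

section
/- Let J, R, E ∈ ℝ^{n×n} with J skew-symmetric (Jᵀ = −J), R symmetric positive semidefinite, and E symmetric positive semidefinite, and consider the real DH pencil L(s) = sE + (J − R). Then L(s) is singular (i.e., det(λE + (J − R)) = 0 for every λ ∈ ℝ) if and only if ker(E) ∩ ker(R) ∩ ker(J) ≠ {0}. -/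
/-!
Evaluate the pencil at `s = -1`: if `(J - R - E) w = 0`, then pairing with `w` kills the skew part
and leaves `wᵀEw + wᵀRw = 0`. Both terms are nonnegative, so `Ew = Rw = 0` by positive
semidefiniteness, and then `Jw = 0` as well. Conversely a common null vector is a null vector of
every member of the pencil.
-/

open Matrix

theorem Matrix.dotProduct_mulVec_self_eq_zero_of_transpose_eq_neg {m α : Type*} [Fintype m]
    [CommRing α] [IsAddTorsionFree α] {J : Matrix m m α} (hJ : Jᵀ = -J) (v : m → α) :
    v ⬝ᵥ J *ᵥ v = 0 := by
  refine self_eq_neg.mp ?_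
  calc v ⬝ᵥ J *ᵥ v = Jᵀ *ᵥ v ⬝ᵥ v := by rw [dotProduct_mulVec, mulVec_transpose]
    _ = -(v ⬝ᵥ J *ᵥ v) := by rw [hJ, neg_mulVec, neg_dotProduct, dotProduct_comm]

theorem Matrix.PosSemidef.mulVec_eq_zero_of_dotProduct_mulVec_add_eq_zero {m : Type*}
    [Fintype m] {A B : Matrix m m ℝ} (hA : A.PosSemidef) (hB : B.PosSemidef) {v : m → ℝ}
    (h : v ⬝ᵥ A *ᵥ v + v ⬝ᵥ B *ᵥ v = 0) : A *ᵥ v = 0 ∧ B *ᵥ v = 0 := by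
  have hA₀ : 0 ≤ v ⬝ᵥ A *ᵥ v := hA.dotProduct_mulVec_nonneg v
  have hB₀ : 0 ≤ v ⬝ᵥ B *ᵥ v := hB.dotProduct_mulVec_nonneg v
  exact ⟨(hA.dotProduct_mulVec_zero_iff v).mp (by simp only [star_trivial]; linarith),
    (hB.dotProduct_mulVec_zero_iff v).mp (by simp only [star_trivial]; linarith)⟩

theorem Matrix.mulVec_eq_zero_of_DH_pencil_mulVec_eq_zero {m : Type*} [Fintype m]
    {J R E : Matrix m m ℝ} (hJ : Jᵀ = -J) (hR : R.PosSemidef) (hE : E.PosSemidef)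
    {l : ℝ} (hl : l < 0) {w : m → ℝ} (hw : (l • E + (J - R)) *ᵥ w = 0) :
    E *ᵥ w = 0 ∧ R *ᵥ w = 0 ∧ J *ᵥ w = 0 := by
  have hpair : l * (w ⬝ᵥ E *ᵥ w) + w ⬝ᵥ J *ᵥ w - w ⬝ᵥ R *ᵥ w = 0 := by
    simpa only [add_mulVec, sub_mulVec, smul_mulVec, dotProduct_add, dotProduct_sub,
      dotProduct_smul, smul_eq_mul, add_sub_assoc, dotProduct_zero] using congrArg (w ⬝ᵥ ·) hw
  have hE₀ : 0 ≤ w ⬝ᵥ E *ᵥ w := hE.dotProduct_mulVec_nonneg w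
  have hR₀ : 0 ≤ w ⬝ᵥ R *ᵥ w := hR.dotProduct_mulVec_nonneg w
  rw [dotProduct_mulVec_self_eq_zero_of_transpose_eq_neg hJ] at hpair
  have hEw : w ⬝ᵥ E *ᵥ w = 0 := by nlinarith
  obtain ⟨hE₁, hR₁⟩ := hE.mulVec_eq_zero_of_dotProduct_mulVec_add_eq_zero hR
    (by rw [hEw] at hpair ⊢; linarith)
  refine ⟨hE₁, hR₁, ?_⟩
  simpa only [add_mulVec, sub_mulVec, smul_mulVec, hE₁, hR₁, smul_zero, zero_add, sub_zero]
    using hw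

/-- A real DH pencil `sE + (J − R)` is singular iff `J`, `R`, `E` have a common
nonzero null vector. -/
theorem real_DH_pencil_singular_iff {n : ℕ} (J R E : Matrix (Fin n) (Fin n) ℝ)
    (hJ : Jᵀ = -J) (hR : R.PosSemidef) (hE : E.PosSemidef) :
    (∀ l : ℝ, (l • E + (J - R)).det = 0) ↔
      ∃ v : Fin n → ℝ, v ≠ 0 ∧ E.mulVec v = 0 ∧ R.mulVec v = 0 ∧ J.mulVec v = 0 := by
  constructor
  · intro hdet
    obtain ⟨w, hw, hnull⟩ := exists_mulVec_eq_zero_iff.mpr (hdet (-1))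
    exact ⟨w, hw, mulVec_eq_zero_of_DH_pencil_mulVec_eq_zero hJ hR hE (by norm_num) hnull⟩
  · rintro ⟨v, hv, hEv, hRv, hJv⟩ l
    refine exists_mulVec_eq_zero_iff.mp ⟨v, hv, ?_⟩
    simp only [add_mulVec, sub_mulVec, smul_mulVec, hEv, hRv, hJv, smul_zero, sub_zero, add_zero]
end

section
/- Let sE + (J − R) be a regular DH pencil, where J, R, E ∈ ℂ^{n×n} with Jᴴ = −J, R ⪰ 0, E ⪰ 0. Then δ₀ᵈ(J,R,E)² = min{ δ₀ᵈ(J,R)², δ₀ᵈ(J,E)², inf_{α ∈ ℳ₃} [ (αᴴJᴴJα)/(αᴴα) + ((αᴴR²α)/(αᴴRα))² + ((αᴴE²α)/(αᴴEα))² ] }, where ℳ₃ = {α ∈ ℂⁿ : Rα ≠ 0 and Eα ≠ 0}. -/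
open Matrix
open scoped ComplexOrder ENNReal

/-- The structured distance `δ₀ᵈ(J,R,E)` (valued in `ℝ≥0∞`; `⊤` if no admissible
perturbation exists): skew-Hermitian perturbations to `J`, negative semidefinite
structure-preserving perturbations to `R` and `E`, making a common null vector. -/
noncomputable def deltaJRE {n : ℕ} (J R E : Matrix (Fin n) (Fin n) ℂ) : ℝ≥0∞ :=
  sInf {r : ℝ≥0∞ | ∃ DJ DR DE : Matrix (Fin n) (Fin n) ℂ,
    DJᴴ = -DJ ∧ (-DR).PosSemidef ∧ (-DE).PosSemidef ∧
    (R + DR).PosSemidef ∧ (E + DE).PosSemidef ∧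
    (∃ x : Fin n → ℂ, x ≠ 0 ∧ (J + DJ).mulVec x = 0 ∧
      (R + DR).mulVec x = 0 ∧ (E + DE).mulVec x = 0) ∧
    r = ENNReal.ofReal
      (Real.sqrt (specNorm DJ ^ 2 + specNorm DR ^ 2 + specNorm DE ^ 2))}

/-- The structured distance `δ₀ᵈ(J,R)` with `E` unperturbed. -/
noncomputable def deltaJR {n : ℕ} (J R E : Matrix (Fin n) (Fin n) ℂ) : ℝ≥0∞ :=
  sInf {r : ℝ≥0∞ | ∃ DJ DR : Matrix (Fin n) (Fin n) ℂ,
    DJᴴ = -DJ ∧ (-DR).PosSemidef ∧ (R + DR).PosSemidef ∧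
    (∃ x : Fin n → ℂ, x ≠ 0 ∧ E.mulVec x = 0 ∧ (R + DR).mulVec x = 0 ∧
      (J + DJ).mulVec x = 0) ∧
    r = ENNReal.ofReal (Real.sqrt (specNorm DJ ^ 2 + specNorm DR ^ 2))}

/-- The structured distance `δ₀ᵈ(J,E)` with `R` unperturbed. -/
noncomputable def deltaJE {n : ℕ} (J R E : Matrix (Fin n) (Fin n) ℂ) : ℝ≥0∞ :=
  sInf {r : ℝ≥0∞ | ∃ DJ DE : Matrix (Fin n) (Fin n) ℂ,
    DJᴴ = -DJ ∧ (-DE).PosSemidef ∧ (E + DE).PosSemidef ∧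
    (∃ x : Fin n → ℂ, x ≠ 0 ∧ (E + DE).mulVec x = 0 ∧ R.mulVec x = 0 ∧
      (J + DJ).mulVec x = 0) ∧
    r = ENNReal.ofReal (Real.sqrt (specNorm DJ ^ 2 + specNorm DE ^ 2))}

/-!
A common null vector `x` of the perturbed matrices lies in `ker E`, in `ker R`, or in `ℳ₃`; the
first two cases are the distances `δ₀ᵈ(J,R)` and `δ₀ᵈ(J,E)`. In the third, `Δ_J x = -J x` forces
`‖Δ_J‖ ≥ ‖Jx‖ / ‖x‖`, and for `P = -Δ_R ⪰ 0` with `P x = R x` the estimate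
`‖P x‖² ≤ ‖P‖ · xᴴ P x` gives `‖Δ_R‖ ≥ xᴴR²x / xᴴRx` (likewise for `E`). These bounds are attained
at every `α ∈ ℳ₃`: the rank-one `Δ_R = -(Rα)(Rα)ᴴ / (αᴴRα)` keeps `R + Δ_R ⪰ 0` by Cauchy–Schwarz
for the semi-inner product of `R`, and `Δ_J = c · H` with `H` a Householder reflection of `α` onto a
multiple of `Jα` and `|c| = ‖Jα‖ / ‖α‖`.
-/

open WithLp
open scoped InnerProductSpace Matrix.Norms.L2Operator

namespace Submodule

variable {𝕜 E : Type*} [RCLike 𝕜] [NormedAddCommGroup E] [InnerProductSpace 𝕜 E]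

theorem reflection_sub_of_inner_eq {v w : E} (h : ‖v‖ = ‖w‖) (h' : ⟪v, w⟫_𝕜 = ⟪w, v⟫_𝕜) :
    reflection (𝕜 ∙ (v - w))ᗮ v = w := by
  set R : E ≃ₗᵢ[𝕜] E := reflection (𝕜 ∙ (v - w))ᗮ
  suffices R v + R v = w + w by
    apply smul_right_injective E (by simp : (2 : 𝕜) ≠ 0)
    simpa [two_smul] using this
  have h₁ : R (v - w) = -(v - w) := reflection_orthogonalComplement_singleton_eq_neg (v - w)
  have h₂ : R (v + w) = v + w := by
    apply reflection_mem_subspace_eq_self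
    rw [Submodule.mem_orthogonal_singleton_iff_inner_right, inner_sub_left, inner_add_right,
      inner_add_right, h', inner_self_eq_norm_sq_to_K, inner_self_eq_norm_sq_to_K, h]
    ring
  convert congr_arg₂ (· + ·) h₂ h₁ using 1
  · simp [R]
  · abel

end Submodule

namespace ContinuousLinearMap

variable {E : Type*} [NormedAddCommGroup E] [InnerProductSpace ℂ E] [CompleteSpace E]

theorem exists_star_eq_neg_apply_eq {x y : E} (hx : x ≠ 0) (hxy : ⟪x, y⟫_ℂ = -⟪y, x⟫_ℂ) :
    ∃ K : E →L[ℂ] E, star K = -K ∧ K x = y ∧ ‖K‖ * ‖x‖ ≤ ‖y‖ := by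
  rcases eq_or_ne y 0 with rfl | hy
  · exact ⟨0, by simp, by simp, by simp⟩
  have hxn : 0 < ‖x‖ := norm_pos_iff.mpr hx
  have hyn : 0 < ‖y‖ := norm_pos_iff.mpr hy
  set c : ℂ := Complex.I * (‖y‖ / ‖x‖ : ℝ)
  have hc : c ≠ 0 := by simp [c, hxn.ne', hyn.ne']
  -- `z` has the norm of `x`, and `⟪x, z⟫` is real because `⟪x, y⟫` is imaginary, so a
  -- reflection carries `x` to `z`.
  set z : E := c⁻¹ • y
  have hz : ‖x‖ = ‖z‖ := by
    simp [z, c, norm_smul, hyn.ne']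
  have hxz : ⟪x, z⟫_ℂ = ⟪z, x⟫_ℂ := by
    simp only [z, inner_smul_right, inner_smul_left, hxy, c]
    simp [Complex.conj_ofReal]
  set R : E ≃ₗᵢ[ℂ] E := Submodule.reflection (ℂ ∙ (x - z))ᗮ
  refine ⟨c • (R : E →L[ℂ] E), ?_, ?_, ?_⟩
  · rw [star_smul, LinearIsometryEquiv.star_eq_symm, Submodule.reflection_symm]
    simp [c, Complex.conj_ofReal, R]
  · simp [R, Submodule.reflection_sub_of_inner_eq hz hxz, z, hc]
  · calc ‖c • (R : E →L[ℂ] E)‖ * ‖x‖ ≤ ‖c‖ * ‖x‖ := by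
          gcongr
          rw [norm_smul]
          exact mul_le_of_le_one_right (norm_nonneg c)
            (LinearIsometry.norm_toContinuousLinearMap_le _)
      _ = ‖y‖ := by simp [c, hxn.ne']

end ContinuousLinearMap

namespace Matrix

variable {m : Type*} [Fintype m]

lemma star_dotProduct_eq_inner (x y : m → ℂ) : star x ⬝ᵥ y = ⟪toLp 2 x, toLp 2 y⟫_ℂ := by
  rw [EuclideanSpace.inner_toLp_toLp, dotProduct_comm]

lemma re_star_dotProduct_self (x : m → ℂ) : (star x ⬝ᵥ x).re = ‖toLp 2 x‖ ^ 2 := by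
  rw [star_dotProduct_eq_inner]
  exact inner_self_eq_norm_sq (𝕜 := ℂ) _

lemma star_dotProduct_conjTranspose_mul_mulVec (A C : Matrix m m ℂ) (x y : m → ℂ) :
    star x ⬝ᵥ (Aᴴ * C) *ᵥ y = ⟪toLp 2 (A *ᵥ x), toLp 2 (C *ᵥ y)⟫_ℂ := by
  rw [← mulVec_mulVec, dotProduct_mulVec, ← star_mulVec, star_dotProduct_eq_inner]

lemma re_star_dotProduct_conjTranspose_mul_self_mulVec (A : Matrix m m ℂ) (x : m → ℂ) :
    (star x ⬝ᵥ (Aᴴ * A) *ᵥ x).re = ‖toLp 2 (A *ᵥ x)‖ ^ 2 := by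
  rw [star_dotProduct_conjTranspose_mul_mulVec]
  exact inner_self_eq_norm_sq (𝕜 := ℂ) _

lemma star_dotProduct_vecMulVec_mulVec (v x : m → ℂ) :
    star x ⬝ᵥ vecMulVec v (star v) *ᵥ x = (‖star x ⬝ᵥ v‖ ^ 2 : ℝ) := by
  rw [vecMulVec_mulVec, op_smul_eq_smul, dotProduct_smul, smul_eq_mul, star_dotProduct, mul_comm]
  push_cast
  exact RCLike.mul_conj (K := ℂ) _

lemma IsHermitian.ofReal_re_star_dotProduct_mulVec {A : Matrix m m ℂ} (hA : A.IsHermitian)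
    (x : m → ℂ) : ((star x ⬝ᵥ A *ᵥ x).re : ℂ) = star x ⬝ᵥ A *ᵥ x :=
  Complex.ext rfl (by simpa using (hA.im_star_dotProduct_mulVec_self x).symm)

lemma IsHermitian.posSemidef_of_re_nonneg {A : Matrix m m ℂ} (hA : A.IsHermitian)
    (h : ∀ x, 0 ≤ (star x ⬝ᵥ A *ᵥ x).re) : A.PosSemidef :=
  .of_dotProduct_mulVec_nonneg hA fun x =>
    Complex.nonneg_iff.2 ⟨h x, (hA.im_star_dotProduct_mulVec_self x).symm⟩

variable [DecidableEq m]

lemma norm_toLp_mulVec_le (A : Matrix m m ℂ) (x : m → ℂ) :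
    ‖toLp 2 (A *ᵥ x)‖ ≤ ‖A‖ * ‖toLp 2 x‖ :=
  (toEuclideanCLM (𝕜 := ℂ) A).le_opNorm (toLp 2 x)

lemma norm_vecMulVec_star (x y : m → ℂ) :
    ‖vecMulVec x (star y)‖ = ‖toLp 2 x‖ * ‖toLp 2 y‖ := by
  rw [← InnerProductSpace.norm_rankOne (𝕜 := ℂ), l2_opNorm_def]
  congr 1
  rw [LinearEquiv.trans_apply, ← InnerProductSpace.symm_toEuclideanLin_rankOne,
    LinearEquiv.apply_symm_apply]
  rfl

open scoped MatrixOrder in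
lemma PosSemidef.exists_eq_conjTranspose_mul_self {P : Matrix m m ℂ} (hP : P.PosSemidef) :
    ∃ B : Matrix m m ℂ, P = Bᴴ * B :=
  CStarAlgebra.nonneg_iff_eq_star_mul_self.mp hP.nonneg

lemma PosSemidef.norm_mulVec_sq_le {P : Matrix m m ℂ} (hP : P.PosSemidef) (x : m → ℂ) :
    ‖toLp 2 (P *ᵥ x)‖ ^ 2 ≤ ‖P‖ * (star x ⬝ᵥ P *ᵥ x).re := by
  obtain ⟨B, rfl⟩ := hP.exists_eq_conjTranspose_mul_self
  rw [re_star_dotProduct_conjTranspose_mul_self_mulVec, l2_opNorm_conjTranspose_mul_self,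
    ← mulVec_mulVec, ← sq, ← mul_pow]
  gcongr
  simpa only [l2_opNorm_conjTranspose] using norm_toLp_mulVec_le Bᴴ (B *ᵥ x)

lemma PosSemidef.re_dotProduct_mulVec_pos {P : Matrix m m ℂ} (hP : P.PosSemidef) {x : m → ℂ}
    (hx : P *ᵥ x ≠ 0) : 0 < (star x ⬝ᵥ P *ᵥ x).re := by
  have : 0 < ‖P‖ * (star x ⬝ᵥ P *ᵥ x).re :=
    (pow_pos (norm_pos_iff.mpr (by simpa using hx)) 2).trans_le (hP.norm_mulVec_sq_le x)
  exact pos_of_mul_pos_right this (norm_nonneg _)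

lemma PosSemidef.sub_smul_vecMulVec_mulVec {S : Matrix m m ℂ} (hS : S.PosSemidef)
    (α : m → ℂ) :
    (S - (star α ⬝ᵥ S *ᵥ α).re⁻¹ • vecMulVec (S *ᵥ α) (star (S *ᵥ α))).PosSemidef := by
  have hH : (vecMulVec (S *ᵥ α) (star (S *ᵥ α))).IsHermitian :=
    (posSemidef_vecMulVec_self_star _).isHermitian
  refine (hS.isHermitian.sub (hH.smul (IsSelfAdjoint.all _))).posSemidef_of_re_nonneg fun x => ?_
  obtain ⟨B, rfl⟩ := hS.exists_eq_conjTranspose_mul_self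
  rw [sub_mulVec, dotProduct_sub, Complex.sub_re, smul_mulVec, dotProduct_smul, Complex.smul_re,
    star_dotProduct_vecMulVec_mulVec, Complex.ofReal_re,
    re_star_dotProduct_conjTranspose_mul_self_mulVec,
    re_star_dotProduct_conjTranspose_mul_self_mulVec, star_dotProduct_conjTranspose_mul_mulVec,
    smul_eq_mul, sub_nonneg]
  rcases eq_or_ne ‖toLp 2 (B *ᵥ α)‖ 0 with hb | hb
  · simp [hb]
  · rw [inv_mul_le_iff₀ (by positivity), mul_comm, ← mul_pow]
    gcongr
    exact norm_inner_le_norm _ _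

lemma PosSemidef.exists_perturbation_mulVec_eq_zero {S : Matrix m m ℂ} (hS : S.PosSemidef)
    {α : m → ℂ} (hα : S *ᵥ α ≠ 0) :
    ∃ DS : Matrix m m ℂ, (-DS).PosSemidef ∧ (S + DS).PosSemidef ∧ (S + DS) *ᵥ α = 0 ∧
      ‖DS‖ ≤ (star α ⬝ᵥ (S * S) *ᵥ α).re / (star α ⬝ᵥ S *ᵥ α).re := by
  set c := (star α ⬝ᵥ S *ᵥ α).re
  have hc : 0 < c := hS.re_dotProduct_mulVec_pos hα
  refine ⟨-(c⁻¹ • vecMulVec (S *ᵥ α) (star (S *ᵥ α))), ?_, ?_, ?_, ?_⟩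
  · rw [neg_neg]
    exact (posSemidef_vecMulVec_self_star _).smul (inv_nonneg.2 hc.le)
  · rw [← sub_eq_add_neg]
    exact hS.sub_smul_vecMulVec_mulVec α
  · have hdot : star (S *ᵥ α) ⬝ᵥ α = c := by
      rw [star_mulVec, ← dotProduct_mulVec, hS.isHermitian.eq,
        hS.isHermitian.ofReal_re_star_dotProduct_mulVec]
    rw [add_mulVec, neg_mulVec, smul_mulVec, vecMulVec_mulVec, op_smul_eq_smul, hdot,
      ← smul_assoc, Complex.real_smul, ← Complex.ofReal_mul, inv_mul_cancel₀ hc.ne', Complex.ofReal_one,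
      one_smul, add_neg_cancel]
  · rw [norm_neg, norm_smul, norm_vecMulVec_star, Real.norm_of_nonneg (inv_nonneg.2 hc.le),
      show S * S = Sᴴ * S by rw [hS.isHermitian.eq],
      re_star_dotProduct_conjTranspose_mul_self_mulVec, inv_mul_eq_div, sq]

lemma exists_skewHermitian_perturbation_mulVec_eq_zero {J : Matrix m m ℂ} (hJ : Jᴴ = -J)
    {α : m → ℂ} (hα : α ≠ 0) :
    ∃ DJ : Matrix m m ℂ, DJᴴ = -DJ ∧ (J + DJ) *ᵥ α = 0 ∧
      ‖DJ‖ ^ 2 ≤ (star α ⬝ᵥ (Jᴴ * J) *ᵥ α).re / (star α ⬝ᵥ α).re := by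
  have hxy : ⟪toLp 2 α, toLp 2 (-(J *ᵥ α))⟫_ℂ = -⟪toLp 2 (-(J *ᵥ α)), toLp 2 α⟫_ℂ := by
    rw [← star_dotProduct_eq_inner, ← star_dotProduct_eq_inner, star_neg, star_mulVec, hJ]
    simp [dotProduct_mulVec, vecMul_neg]
  obtain ⟨K, hK, hKα, hKnorm⟩ := ContinuousLinearMap.exists_star_eq_neg_apply_eq
    (by simpa using hα) hxy
  obtain ⟨DJ, rfl⟩ := EquivLike.surjective (toEuclideanCLM (𝕜 := ℂ) (n := m)) K
  refine ⟨DJ, ?_, ?_, ?_⟩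
  · apply EquivLike.injective (toEuclideanCLM (𝕜 := ℂ))
    rw [← star_eq_conjTranspose, map_star, hK, map_neg]
  · have hDJα : DJ *ᵥ α = -(J *ᵥ α) := by simpa using congrArg ofLp hKα
    rw [add_mulVec, hDJα, add_neg_cancel]
  · rw [re_star_dotProduct_conjTranspose_mul_self_mulVec, re_star_dotProduct_self,
      le_div_iff₀ (pow_pos (norm_pos_iff.2 (by simpa using hα)) 2), ← mul_pow]
    gcongr
    simpa [cstar_norm_def] using hKnorm

lemma re_div_le_norm_sq_of_add_mulVec_eq_zero {J DJ : Matrix m m ℂ} {x : m → ℂ}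
    (hker : (J + DJ) *ᵥ x = 0) (hx : x ≠ 0) :
    (star x ⬝ᵥ (Jᴴ * J) *ᵥ x).re / (star x ⬝ᵥ x).re ≤ ‖DJ‖ ^ 2 := by
  have hJx : J *ᵥ x = -(DJ *ᵥ x) := eq_neg_of_add_eq_zero_left (by rwa [add_mulVec] at hker)
  rw [re_star_dotProduct_conjTranspose_mul_self_mulVec, re_star_dotProduct_self,
    div_le_iff₀ (pow_pos (norm_pos_iff.2 (by simpa using hx)) 2), hJx, toLp_neg, norm_neg,
    ← mul_pow]
  gcongr
  exact norm_toLp_mulVec_le _ _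

lemma sq_re_div_le_norm_sq_of_add_mulVec_eq_zero {S DS : Matrix m m ℂ} {x : m → ℂ}
    (hS : S.IsHermitian) (hDS : (-DS).PosSemidef) (hker : (S + DS) *ᵥ x = 0)
    (hx : S *ᵥ x ≠ 0) :
    ((star x ⬝ᵥ (S * S) *ᵥ x).re / (star x ⬝ᵥ S *ᵥ x).re) ^ 2 ≤ ‖DS‖ ^ 2 := by
  have hSx : (-DS) *ᵥ x = S *ᵥ x := by
    rw [neg_mulVec, neg_eq_iff_add_eq_zero, add_comm, ← add_mulVec, hker]
  have hpos := hDS.re_dotProduct_mulVec_pos (hSx ▸ hx)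
  have hbound := hDS.norm_mulVec_sq_le x
  rw [hSx] at hbound hpos
  rw [norm_neg] at hbound
  rw [show S * S = Sᴴ * S by rw [hS.eq], re_star_dotProduct_conjTranspose_mul_self_mulVec]
  exact pow_le_pow_left₀ (div_nonneg (sq_nonneg _) hpos.le) (by rwa [div_le_iff₀ hpos]) 2

end Matrix

lemma specNorm_eq_norm {k : Type*} [Fintype k] [DecidableEq k] (X : Matrix k k ℂ) :
    specNorm X = ‖X‖ :=
  rfl

namespace ENNReal

lemma ofReal_sqrt_sq {t : ℝ} (ht : 0 ≤ t) : ENNReal.ofReal √t ^ 2 = ENNReal.ofReal t := by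
  rw [← ENNReal.ofReal_pow (Real.sqrt_nonneg t), Real.sq_sqrt ht]

lemma sq_le_ofReal_of_le_ofReal_sqrt {x : ℝ≥0∞} {t : ℝ} (ht : 0 ≤ t)
    (h : x ≤ ENNReal.ofReal √t) : x ^ 2 ≤ ENNReal.ofReal t :=
  ofReal_sqrt_sq ht ▸ pow_le_pow_left' h 2

lemma sInf_sq (s : Set ℝ≥0∞) : sInf s ^ 2 = ⨅ r ∈ s, r ^ 2 := by
  rw [(pow_left_mono 2).map_sInf_of_continuousAt (ENNReal.continuous_pow 2).continuousAt
    (by simp), sInf_image]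

end ENNReal

/-- The infimum over `ℳ₃` in the formula for `δ₀ᵈ(J,R,E)²`. -/
noncomputable def rayleighInf {n : ℕ} (J R E : Matrix (Fin n) (Fin n) ℂ) : ℝ≥0∞ :=
  sInf {r : ℝ≥0∞ | ∃ α : Fin n → ℂ,
    R.mulVec α ≠ 0 ∧ E.mulVec α ≠ 0 ∧
    r = ENNReal.ofReal
      ((star α ⬝ᵥ (Jᴴ * J).mulVec α).re / (star α ⬝ᵥ α).re +
       ((star α ⬝ᵥ (R * R).mulVec α).re / (star α ⬝ᵥ R.mulVec α).re) ^ 2 +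
       ((star α ⬝ᵥ (E * E).mulVec α).re / (star α ⬝ᵥ E.mulVec α).re) ^ 2)}

section StructuredDistance

variable {n : ℕ} {J R E : Matrix (Fin n) (Fin n) ℂ}

lemma deltaJRE_le_deltaJR (hE : E.PosSemidef) : deltaJRE J R E ≤ deltaJR J R E := by
  refine sInf_le_sInf ?_
  rintro r ⟨DJ, DR, hDJ, hDR, hRDR, ⟨x, hx, hEx, hRx, hJx⟩, rfl⟩
  refine ⟨DJ, DR, 0, hDJ, hDR, by simpa using PosSemidef.zero, hRDR, by simpa using hE,
    ⟨x, hx, hJx, hRx, by simpa using hEx⟩, ?_⟩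
  simp [specNorm_eq_norm]

lemma deltaJRE_le_deltaJE (hR : R.PosSemidef) : deltaJRE J R E ≤ deltaJE J R E := by
  refine sInf_le_sInf ?_
  rintro r ⟨DJ, DE, hDJ, hDE, hEDE, ⟨x, hx, hEx, hRx, hJx⟩, rfl⟩
  refine ⟨DJ, 0, DE, hDJ, by simpa using PosSemidef.zero, hDE, by simpa using hR, hEDE,
    ⟨x, hx, hJx, by simpa using hRx, hEx⟩, ?_⟩
  simp [specNorm_eq_norm]

lemma deltaJRE_sq_le_rayleighInf (hJ : Jᴴ = -J) (hR : R.PosSemidef) (hE : E.PosSemidef) :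
    deltaJRE J R E ^ 2 ≤ rayleighInf J R E := by
  refine le_sInf ?_
  rintro r ⟨α, hRα, hEα, rfl⟩
  have hα : α ≠ 0 := by rintro rfl; simp at hRα
  obtain ⟨DJ, hDJ, hJα, hDJα⟩ := exists_skewHermitian_perturbation_mulVec_eq_zero hJ hα
  obtain ⟨DR, hDR, hRDR, hRα', hDRα⟩ := hR.exists_perturbation_mulVec_eq_zero hRα
  obtain ⟨DE, hDE, hEDE, hEα', hDEα⟩ := hE.exists_perturbation_mulVec_eq_zero hEα
  have hDelta : deltaJRE J R E ^ 2 ≤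
      ENNReal.ofReal (specNorm DJ ^ 2 + specNorm DR ^ 2 + specNorm DE ^ 2) := by
    refine ENNReal.sq_le_ofReal_of_le_ofReal_sqrt (by positivity) ?_
    rw [deltaJRE]
    exact sInf_le ⟨DJ, DR, DE, hDJ, hDR, hDE, hRDR, hEDE, ⟨α, hα, hJα, hRα', hEα'⟩, rfl⟩
  refine hDelta.trans (ENNReal.ofReal_le_ofReal ?_)
  simp only [specNorm_eq_norm]
  gcongr

lemma min_le_deltaJRE_sq (hR : R.IsHermitian) (hE : E.IsHermitian) :
    min (deltaJR J R E ^ 2) (min (deltaJE J R E ^ 2) (rayleighInf J R E)) ≤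
      deltaJRE J R E ^ 2 := by
  rw [deltaJRE, ENNReal.sInf_sq]
  refine le_iInf₂ ?_
  rintro _ ⟨DJ, DR, DE, hDJ, hDR, hDE, hRDR, hEDE, ⟨x, hx, hJx, hRx, hEx⟩, rfl⟩
  rw [ENNReal.ofReal_sqrt_sq (by positivity)]
  by_cases hEx0 : E *ᵥ x = 0
  · refine (min_le_left _ _).trans ?_
    refine (ENNReal.sq_le_ofReal_of_le_ofReal_sqrt (t := specNorm DJ ^ 2 + specNorm DR ^ 2)
      (by positivity) ?_).trans (ENNReal.ofReal_le_ofReal ?_)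
    · rw [deltaJR]
      exact sInf_le ⟨DJ, DR, hDJ, hDR, hRDR, ⟨x, hx, hEx0, hRx, hJx⟩, rfl⟩
    · simp only [specNorm_eq_norm]
      linarith [sq_nonneg ‖DE‖]
  by_cases hRx0 : R *ᵥ x = 0
  · refine (min_le_right _ _).trans ((min_le_left _ _).trans ?_)
    refine (ENNReal.sq_le_ofReal_of_le_ofReal_sqrt (t := specNorm DJ ^ 2 + specNorm DE ^ 2)
      (by positivity) ?_).trans (ENNReal.ofReal_le_ofReal ?_)
    · rw [deltaJE]
      exact sInf_le ⟨DJ, DE, hDJ, hDE, hEDE, ⟨x, hx, hEx, hRx0, hJx⟩, rfl⟩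
    · simp only [specNorm_eq_norm]
      linarith [sq_nonneg ‖DR‖]
  refine (min_le_right _ _).trans ((min_le_right _ _).trans ?_)
  refine (show rayleighInf J R E ≤ _ from sInf_le ⟨x, hRx0, hEx0, rfl⟩).trans
    (ENNReal.ofReal_le_ofReal ?_)
  exact add_le_add (add_le_add (re_div_le_norm_sq_of_add_mulVec_eq_zero hJx hx)
    (sq_re_div_le_norm_sq_of_add_mulVec_eq_zero hR hDR hRx hRx0))
    (sq_re_div_le_norm_sq_of_add_mulVec_eq_zero hE hDE hEx hEx0)

end StructuredDistance

theorem DH_structured_distance_common_null_general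
    {n : ℕ} (J R E : Matrix (Fin n) (Fin n) ℂ)
    (hJ : Jᴴ = -J) (hR : R.PosSemidef) (hE : E.PosSemidef) :
    deltaJRE J R E ^ 2 =
      min (deltaJR J R E ^ 2) (min (deltaJE J R E ^ 2)
        (sInf {r : ℝ≥0∞ | ∃ α : Fin n → ℂ,
          R.mulVec α ≠ 0 ∧ E.mulVec α ≠ 0 ∧
          r = ENNReal.ofReal
            ((star α ⬝ᵥ (Jᴴ * J).mulVec α).re / (star α ⬝ᵥ α).re +
             ((star α ⬝ᵥ (R * R).mulVec α).re / (star α ⬝ᵥ R.mulVec α).re) ^ 2 +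
             ((star α ⬝ᵥ (E * E).mulVec α).re / (star α ⬝ᵥ E.mulVec α).re) ^ 2)})) := by
  refine le_antisymm (le_min ?_ (le_min ?_ ?_)) (min_le_deltaJRE_sq hR.isHermitian hE.isHermitian)
  · exact pow_le_pow_left' (deltaJRE_le_deltaJR hE) 2
  · exact pow_le_pow_left' (deltaJRE_le_deltaJE hR) 2
  · exact deltaJRE_sq_le_rayleighInf hJ hR hE

/-- For a regular DH pencil `sE + (J − R)`:
`δ₀ᵈ(J,R,E)² = min{ δ₀ᵈ(J,R)², δ₀ᵈ(J,E)²,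
  inf_{α ∈ ℳ₃} (αᴴJᴴJα)/(αᴴα) + ((αᴴR²α)/(αᴴRα))² + ((αᴴE²α)/(αᴴEα))² }`,
where `ℳ₃ = {α : Rα ≠ 0 ∧ Eα ≠ 0}`. -/
theorem DH_structured_distance_common_null
    {n : ℕ} (J R E : Matrix (Fin n) (Fin n) ℂ)
    (hJ : Jᴴ = -J) (hR : R.PosSemidef) (hE : E.PosSemidef)
    (hreg : ∃ l : ℂ, (l • E + (J - R)).det ≠ 0) :
    deltaJRE J R E ^ 2 =
      min (deltaJR J R E ^ 2) (min (deltaJE J R E ^ 2)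
        (sInf {r : ℝ≥0∞ | ∃ α : Fin n → ℂ,
          R.mulVec α ≠ 0 ∧ E.mulVec α ≠ 0 ∧
          r = ENNReal.ofReal
            ((star α ⬝ᵥ (Jᴴ * J).mulVec α).re / (star α ⬝ᵥ α).re +
             ((star α ⬝ᵥ (R * R).mulVec α).re / (star α ⬝ᵥ R.mulVec α).re) ^ 2 +
             ((star α ⬝ᵥ (E * E).mulVec α).re / (star α ⬝ᵥ E.mulVec α).re) ^ 2)})) :=
  DH_structured_distance_common_null_general J R E hJ hR hE
end

section
/- Let m, n ≥ 1 and let P(s) = Σ_{j=0}^{m} s^j A_j be a matrix polynomial with A₀, …, A_m ∈ ℂ^{n×n}. Then the unstructured distance to a common null space of P, namely the infimum of √(Σ_{j=0}^{m} ‖Δ_j‖²) over all tuples (Δ₀, …, Δ_m) ∈ (ℂ^{n×n})^{m+1} for which there exists a nonzero v ∈ ℂⁿ with (A_j − Δ_j)v = 0 for every j = 0, …, m, equals √(λ_min(Σ_{j=0}^{m} A_jᴴA_j)). -/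
open Matrix

/-!
Put `H = ∑ⱼ Aⱼᴴ Aⱼ`, so that `⟪x, H x⟫ = ∑ⱼ ‖Aⱼ x‖²`. If `(Aⱼ - Δⱼ) v = 0` with `v ≠ 0`, then
`λ_min(H) ‖v‖² ≤ ∑ⱼ ‖Aⱼ v‖² = ∑ⱼ ‖Δⱼ v‖² ≤ (∑ⱼ ‖Δⱼ‖²) ‖v‖²`. Conversely, for a unit eigenvector
`v` of `H` for `λ_min(H)` the rank-one perturbations `Δⱼ = (Aⱼ v) vᴴ` satisfy `Δⱼ v = Aⱼ v` and
`‖Δⱼ‖ = ‖Aⱼ v‖`, hence `∑ⱼ ‖Δⱼ‖² = ⟪v, H v⟫ = λ_min(H)`.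
-/

open RCLike InnerProductSpace
open scoped InnerProductSpace

section
variable {𝕜 k : Type*} [RCLike 𝕜] [Fintype k] [DecidableEq k]

lemma Matrix.IsHermitian.toEuclideanCLM_eigenvectorBasis {A : Matrix k k 𝕜}
    (hA : A.IsHermitian) (i : k) :
    toEuclideanCLM (𝕜 := 𝕜) A (hA.eigenvectorBasis i) =
      (hA.eigenvalues i : 𝕜) • hA.eigenvectorBasis i :=
  WithLp.ofLp_injective 2 <| by
    rw [ofLp_toEuclideanCLM, WithLp.ofLp_smul, ← RCLike.real_smul_eq_coe_smul]
    exact hA.mulVec_eigenvectorBasis i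

lemma Matrix.IsHermitian.re_inner_toEuclideanCLM_self {A : Matrix k k 𝕜} (hA : A.IsHermitian)
    (x : EuclideanSpace 𝕜 k) :
    re ⟪x, toEuclideanCLM (𝕜 := 𝕜) A x⟫_𝕜 =
      ∑ i, hA.eigenvalues i * ‖⟪hA.eigenvectorBasis i, x⟫_𝕜‖ ^ 2 := by
  have hsymm : ∀ y, ⟪toEuclideanCLM (𝕜 := 𝕜) A y, x⟫_𝕜 = ⟪y, toEuclideanCLM (𝕜 := 𝕜) A x⟫_𝕜 :=
    fun y => isSymmetric_toEuclideanLin_iff.mpr hA y x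
  rw [← hA.eigenvectorBasis.sum_inner_mul_inner, map_sum]
  refine Finset.sum_congr rfl fun i _ => ?_
  rw [← hsymm, hA.toEuclideanCLM_eigenvectorBasis, inner_smul_real_left, real_smul_eq_coe_mul,
    mul_left_comm, re_ofReal_mul, inner_mul_symm_re_eq_norm, norm_mul, ← inner_conj_symm x,
    norm_conj, sq]

lemma Matrix.IsHermitian.iInf_eigenvalues_mul_norm_sq_le {A : Matrix k k 𝕜}
    (hA : A.IsHermitian) (x : EuclideanSpace 𝕜 k) :
    (⨅ i, hA.eigenvalues i) * ‖x‖ ^ 2 ≤ re ⟪x, toEuclideanCLM (𝕜 := 𝕜) A x⟫_𝕜 := by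
  rw [hA.re_inner_toEuclideanCLM_self, ← hA.eigenvectorBasis.sum_sq_norm_inner_right,
    Finset.mul_sum]
  exact Finset.sum_le_sum fun i _ =>
    mul_le_mul_of_nonneg_right (ciInf_le (Finite.bddBelow_range _) i) (sq_nonneg _)

lemma Matrix.re_inner_toEuclideanCLM_sum_conjTranspose_mul_self {ι : Type*} [Fintype ι]
    (A : ι → Matrix k k 𝕜) (x : EuclideanSpace 𝕜 k) :
    re ⟪x, toEuclideanCLM (𝕜 := 𝕜) (∑ j, (A j)ᴴ * A j) x⟫_𝕜 =
      ∑ j, ‖toEuclideanCLM (𝕜 := 𝕜) (A j) x‖ ^ 2 := by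
  simp only [map_sum, map_mul, ← star_eq_conjTranspose, map_star, _root_.sum_apply,
    inner_sum, mul_apply_eq_comp, ContinuousLinearMap.star_eq_adjoint,
    ContinuousLinearMap.adjoint_inner_right, inner_self_eq_norm_sq]

end

section
variable {𝕜 ι E F : Type*} [RCLike 𝕜] [Fintype ι]

lemma sum_norm_sq_apply_le_of_apply_eq [SeminormedAddCommGroup E] [NormedSpace 𝕜 E]
    [SeminormedAddCommGroup F] [NormedSpace 𝕜 F] {T S : ι → E →L[𝕜] F} {x : E}
    (h : ∀ j, T j x = S j x) : ∑ j, ‖T j x‖ ^ 2 ≤ (∑ j, ‖S j‖ ^ 2) * ‖x‖ ^ 2 := by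
  rw [Finset.sum_mul]
  refine Finset.sum_le_sum fun j _ => ?_
  rw [h j, ← mul_pow]
  exact pow_le_pow_left₀ (norm_nonneg _) ((S j).le_opNorm x) 2

lemma rankOne_apply_self_of_norm_eq_one [NormedAddCommGroup E] [InnerProductSpace 𝕜 E]
    [NormedAddCommGroup F] [NormedSpace 𝕜 F] {x : E} (hx : ‖x‖ = 1) (y : F) :
    rankOne 𝕜 y x x = y := by
  rw [rankOne_apply, inner_self_eq_norm_sq_to_K, hx, ofReal_one, one_pow, one_smul]

end

lemma Matrix.isHermitian_sum_conjTranspose_mul_self {α ι m n : Type*} [NonUnitalSemiring α]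
    [StarRing α] [Fintype m] (s : Finset ι) (A : ι → Matrix m n α) :
    (∑ j ∈ s, (A j)ᴴ * A j).IsHermitian :=
  isSelfAdjoint_sum s fun j _ => isHermitian_conjTranspose_mul_self (A j)

section
variable {k ι : Type*} [Fintype k] [DecidableEq k] [Fintype ι]

lemma lamMin_eq_iInf_eigenvalues {H : Matrix k k ℂ} (hH : H.IsHermitian) :
    lamMin H = ⨅ i, hH.eigenvalues i :=
  dif_pos hH

lemma lamMin_le_sum_specNorm_sq {A D : ι → Matrix k k ℂ} {v : k → ℂ} (hv : v ≠ 0)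
    (hAD : ∀ j, (A j - D j) *ᵥ v = 0) :
    lamMin (∑ j, (A j)ᴴ * A j) ≤ ∑ j, specNorm (D j) ^ 2 := by
  have hH := isHermitian_sum_conjTranspose_mul_self Finset.univ A
  set x : EuclideanSpace ℂ k := WithLp.toLp 2 v
  have hx : 0 < ‖x‖ ^ 2 := by
    have : x ≠ 0 := (WithLp.toLp_eq_zero 2).not.mpr hv
    positivity
  have hAx : ∀ j, toEuclideanCLM (𝕜 := ℂ) (A j) x = toEuclideanCLM (𝕜 := ℂ) (D j) x :=
    fun j => by
      rw [← sub_eq_zero, ← _root_.sub_apply, ← map_sub, toEuclideanCLM_toLp, hAD j]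
      rfl
  refine le_of_mul_le_mul_right ?_ hx
  calc lamMin (∑ j, (A j)ᴴ * A j) * ‖x‖ ^ 2
      ≤ re ⟪x, toEuclideanCLM (𝕜 := ℂ) (∑ j, (A j)ᴴ * A j) x⟫_ℂ := by
        rw [lamMin_eq_iInf_eigenvalues hH]
        exact hH.iInf_eigenvalues_mul_norm_sq_le x
    _ = ∑ j, ‖toEuclideanCLM (𝕜 := ℂ) (A j) x‖ ^ 2 :=
        re_inner_toEuclideanCLM_sum_conjTranspose_mul_self A x
    _ ≤ (∑ j, specNorm (D j) ^ 2) * ‖x‖ ^ 2 := sum_norm_sq_apply_le_of_apply_eq hAx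

lemma exists_sum_specNorm_sq_eq_lamMin [Nonempty k] (A : ι → Matrix k k ℂ) :
    ∃ (D : ι → Matrix k k ℂ) (v : k → ℂ), v ≠ 0 ∧ (∀ j, (A j - D j) *ᵥ v = 0) ∧
      ∑ j, specNorm (D j) ^ 2 = lamMin (∑ j, (A j)ᴴ * A j) := by
  have hH := isHermitian_sum_conjTranspose_mul_self Finset.univ A
  obtain ⟨i, hi⟩ := exists_eq_ciInf_of_finite (f := hH.eigenvalues)
  set x := hH.eigenvectorBasis i
  have hx : ‖x‖ = 1 := hH.eigenvectorBasis.norm_eq_one i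
  let D j := (toEuclideanCLM (𝕜 := ℂ)).symm (rankOne ℂ (toEuclideanCLM (𝕜 := ℂ) (A j) x) x)
  have hD : ∀ j, specNorm (D j) = ‖toEuclideanCLM (𝕜 := ℂ) (A j) x‖ := fun j => by
    rw [specNorm, StarAlgEquiv.apply_symm_apply, norm_rankOne, hx, mul_one]
  refine ⟨D, WithLp.ofLp x, ?_, fun j => ?_, ?_⟩
  · exact (WithLp.ofLp_eq_zero 2).not.mpr (norm_ne_zero_iff.mp (by simp [hx]))
  · rw [← ofLp_toEuclideanCLM, map_sub, _root_.sub_apply, StarAlgEquiv.apply_symm_apply,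
      rankOne_apply_self_of_norm_eq_one hx, sub_self, WithLp.ofLp_zero]
  · rw [Finset.sum_congr rfl fun j _ => by rw [hD j],
      ← re_inner_toEuclideanCLM_sum_conjTranspose_mul_self, hH.toEuclideanCLM_eigenvectorBasis,
      inner_smul_right, inner_self_eq_norm_sq_to_K, hx, lamMin_eq_iInf_eigenvalues hH, ← hi]
    simp

end

theorem unstructured_distance_common_null_polynomial_general
    {m n : ℕ} (hn : 1 ≤ n)
    (A : Fin (m + 1) → Matrix (Fin n) (Fin n) ℂ) :
    sInf {r : ℝ | ∃ (D : Fin (m + 1) → Matrix (Fin n) (Fin n) ℂ) (v : Fin n → ℂ),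
        v ≠ 0 ∧ (∀ j, (A j - D j).mulVec v = 0) ∧
        r = Real.sqrt (∑ j, specNorm (D j) ^ 2)} =
      Real.sqrt (lamMin (∑ j, (A j)ᴴ * A j)) := by
  have : Nonempty (Fin n) := ⟨⟨0, hn⟩⟩
  refine IsLeast.csInf_eq ⟨?_, ?_⟩
  · obtain ⟨D, v, hv, hAD, hsum⟩ := exists_sum_specNorm_sq_eq_lamMin A
    exact ⟨D, v, hv, hAD, by rw [hsum]⟩
  · rintro r ⟨D, v, hv, hAD, rfl⟩
    exact Real.sqrt_le_sqrt (lamMin_le_sum_specNorm_sq hv hAD)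

/-- Unstructured distance to a common null space of the coefficients of a matrix
polynomial `P(s) = Σ_{j=0}^m s^j A_j`:
`δ₀(P) = √(λ_min(Σ_j A_jᴴ A_j))`. -/
theorem unstructured_distance_common_null_polynomial
    {m n : ℕ} (hm : 1 ≤ m) (hn : 1 ≤ n)
    (A : Fin (m + 1) → Matrix (Fin n) (Fin n) ℂ) :
    sInf {r : ℝ | ∃ (D : Fin (m + 1) → Matrix (Fin n) (Fin n) ℂ) (v : Fin n → ℂ),
        v ≠ 0 ∧ (∀ j, (A j - D j).mulVec v = 0) ∧
        r = Real.sqrt (∑ j, specNorm (D j) ^ 2)} =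
      Real.sqrt (lamMin (∑ j, (A j)ᴴ * A j)) :=
  unstructured_distance_common_null_polynomial_general hn A
end
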